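/- arXiv:math/0005026 — 2 statements merged into one kernel-verified Lean document; each statement's English description precedes it below -/
import Mathlib

section
/- Let P(x) = x^5 + m x^4 + n x^3 + p x^2 + q x + r over ℂ with roots x₁,…,x₅, and T(x) = x^4 + d x^3 + c x^2 + b x + a. The coefficient of y^4 in ∏_{i}(y + T(xᵢ)) equals ∑_i T(xᵢ), which by Newton's identities equals 5a + b·(-m) + c·(m² - 2n) + d·(-m³ + 3mn - 3p) + (m⁴ - 4m²n + 2n² + 4mp - 4q). Consequently, choosing a = (1/5)·(d m³ + b m − 3 d m n − 2 n² + 4q − c m² + 2 c n − 4 m p + 4 m² n + 3 d p − m⁴) makes this coefficient vanish. -/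
/-!
The coefficient of `y⁴` in `∏ᵢ (y + T(xᵢ))` is `∑ᵢ T(xᵢ) = p₄ + d p₃ + c p₂ + b p₁ + 5a`, where
`pₖ = ∑ᵢ xᵢᵏ`. Newton's identities express `p₁, …, p₄` through the elementary symmetric functions
of the roots, and Vieta's formulas identify these with `-m, n, -p, q`.
-/

open Finset

namespace MvPolynomial

variable (σ R : Type*) [Fintype σ] [CommRing R]

theorem psum_one_eq_esymm : psum σ R 1 = esymm σ R 1 := by
  rw [psum_one, esymm_one]

theorem psum_two_eq_esymm : psum σ R 2 = esymm σ R 1 ^ 2 - 2 * esymm σ R 2 := by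
  have : {a ∈ antidiagonal 2 | a.1 ∈ Set.Ioo 0 2} = {(1, 1)} := by decide
  rw [psum_eq_mul_esymm_sub_sum σ R 2 two_pos, this, sum_singleton, psum_one_eq_esymm]
  push_cast
  ring

theorem psum_three_eq_esymm :
    psum σ R 3 = esymm σ R 1 ^ 3 - 3 * esymm σ R 1 * esymm σ R 2 + 3 * esymm σ R 3 := by
  have : {a ∈ antidiagonal 3 | a.1 ∈ Set.Ioo 0 3} = {(1, 2), (2, 1)} := by decide
  rw [psum_eq_mul_esymm_sub_sum σ R 3 three_pos, this, sum_pair (by decide), psum_two_eq_esymm,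
    psum_one_eq_esymm]
  push_cast
  ring

theorem psum_four_eq_esymm :
    psum σ R 4 = esymm σ R 1 ^ 4 - 4 * esymm σ R 1 ^ 2 * esymm σ R 2 + 2 * esymm σ R 2 ^ 2 +
      4 * esymm σ R 1 * esymm σ R 3 - 4 * esymm σ R 4 := by
  have : {a ∈ antidiagonal 4 | a.1 ∈ Set.Ioo 0 4} = {(1, 3), (2, 2), (3, 1)} := by decide
  rw [psum_eq_mul_esymm_sub_sum σ R 4 four_pos, this, sum_insert (by decide), sum_pair (by decide),
    psum_three_eq_esymm, psum_two_eq_esymm, psum_one_eq_esymm]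
  push_cast
  ring

theorem sum_quartic_eq_esymm (x : σ → R) (a b c d : R) :
    ∑ i, (x i ^ 4 + d * x i ^ 3 + c * x i ^ 2 + b * x i + a) =
      Fintype.card σ * a + b * eval x (esymm σ R 1) +
        c * (eval x (esymm σ R 1) ^ 2 - 2 * eval x (esymm σ R 2)) +
        d * (eval x (esymm σ R 1) ^ 3 - 3 * eval x (esymm σ R 1) * eval x (esymm σ R 2) +
          3 * eval x (esymm σ R 3)) +
        (eval x (esymm σ R 1) ^ 4 - 4 * eval x (esymm σ R 1) ^ 2 * eval x (esymm σ R 2) +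
          2 * eval x (esymm σ R 2) ^ 2 + 4 * eval x (esymm σ R 1) * eval x (esymm σ R 3) -
          4 * eval x (esymm σ R 4)) := by
  have eval_psum (k : ℕ) : eval x (psum σ R k) = ∑ i, x i ^ k := by simp [psum]
  have eval_esymm_one : eval x (esymm σ R 1) = ∑ i, x i := by simp
  simp only [sum_add_distrib, ← mul_sum, sum_const, card_univ, nsmul_eq_mul]
  rw [← eval_psum 4, ← eval_psum 3, ← eval_psum 2, ← eval_esymm_one, psum_four_eq_esymm,
    psum_three_eq_esymm, psum_two_eq_esymm]
  simp only [map_sub, map_add, map_mul, map_pow, map_ofNat]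
  ring

end MvPolynomial

namespace Polynomial

variable {R : Type*} [CommRing R]

theorem coeff_prod_X_sub_C_eq_esymm {σ : Type*} [Fintype σ] (x : σ → R) {k : ℕ}
    (hk : k ≤ Fintype.card σ) :
    (∏ i, (X - C (x i))).coeff k =
      (-1) ^ (Fintype.card σ - k) *
        MvPolynomial.eval x (MvPolynomial.esymm σ R (Fintype.card σ - k)) := by
  have hcard : Multiset.card (univ.val.map x) = Fintype.card σ := by simp
  have := Multiset.prod_X_sub_C_coeff (univ.val.map x) (hcard ▸ hk)
  rw [Multiset.map_map, Function.comp_def, hcard,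
    ← MvPolynomial.aeval_esymm_eq_multiset_esymm σ R] at this
  exact this

theorem coeff_prod_X_add_C_card_pred {ι : Type*} (s : Finset ι) (t : ι → R) (hs : 0 < #s) :
    (∏ i ∈ s, (X + C (t i))).coeff (#s - 1) = ∑ i ∈ s, t i := by
  simpa using prod_X_sub_C_coeff_card_pred s (fun i => -t i) hs

end Polynomial

open Polynomial Finset in
/-- For the Tschirnhaus transformation `T(x) = x⁴ + d x³ + c x² + b x + a` applied to a
monic quintic with roots `x₁,…,x₅`, the coefficient of `y⁴` in `∏ᵢ (y + T(xᵢ))` equals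
`∑ᵢ T(xᵢ)`, which by Newton's identities equals
`5a - bm + c(m² - 2n) + d(-m³ + 3mn - 3p) + (m⁴ - 4m²n + 2n² + 4mp - 4q)`; hence the
paper's choice of `a` makes this coefficient vanish. -/
theorem stmt_8 (m n p q r a b c d : ℂ) (x : Fin 5 → ℂ)
    (hroots : (∏ i : Fin 5, (X - C (x i))) =
      X ^ 5 + C m * X ^ 4 + C n * X ^ 3 + C p * X ^ 2 + C q * X + C r) :
    (∏ i : Fin 5,
          (X + C ((x i) ^ 4 + d * (x i) ^ 3 + c * (x i) ^ 2 + b * (x i) + a))).coeff 4 =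
        ∑ i : Fin 5, ((x i) ^ 4 + d * (x i) ^ 3 + c * (x i) ^ 2 + b * (x i) + a) ∧
      (∑ i : Fin 5, ((x i) ^ 4 + d * (x i) ^ 3 + c * (x i) ^ 2 + b * (x i) + a)) =
        5 * a + b * (-m) + c * (m ^ 2 - 2 * n) + d * (-m ^ 3 + 3 * m * n - 3 * p) +
          (m ^ 4 - 4 * m ^ 2 * n + 2 * n ^ 2 + 4 * m * p - 4 * q) ∧
      (a = 1 / 5 * (d * m ^ 3 + b * m - 3 * d * m * n - 2 * n ^ 2 + 4 * q - c * m ^ 2 +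
            2 * c * n - 4 * m * p + 4 * m ^ 2 * n + 3 * d * p - m ^ 4) →
        (∑ i : Fin 5, ((x i) ^ 4 + d * (x i) ^ 3 + c * (x i) ^ 2 + b * (x i) + a)) = 0) := by
  have vieta (k : ℕ) (hk : k ≤ 5) := hroots ▸ coeff_prod_X_sub_C_eq_esymm x (k := k) (by simpa)
  have hm := vieta 4 (by norm_num)
  have hn := vieta 3 (by norm_num)
  have hp := vieta 2 (by norm_num)
  have hq := vieta 1 (by norm_num)
  simp only [coeff_add, coeff_C_mul, coeff_X_pow, coeff_X, coeff_C] at hm hn hp hq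
  norm_num [-MvPolynomial.esymm_one] at hm hn hp hq
  have hsum : ∑ i : Fin 5, ((x i) ^ 4 + d * (x i) ^ 3 + c * (x i) ^ 2 + b * (x i) + a) =
      5 * a + b * (-m) + c * (m ^ 2 - 2 * n) + d * (-m ^ 3 + 3 * m * n - 3 * p) +
        (m ^ 4 - 4 * m ^ 2 * n + 2 * n ^ 2 + 4 * m * p - 4 * q) := by
    rw [MvPolynomial.sum_quartic_eq_esymm, Fintype.card_fin, hm, hn, hp, hq]
    ring
  refine ⟨?_, hsum, fun ha => by rw [hsum, ha]; ring⟩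
  exact coeff_prod_X_add_C_card_pred univ
    (fun i => x i ^ 4 + d * x i ^ 3 + c * x i ^ 2 + b * x i + a) (by simp)
end

section
/- The formal power series u(w) = ∑_{k=0}^∞ binomial(5k,k)/(4k+1) · w^k over ℚ satisfies u(w) = 1 + w·u(w)^5. -/
/-!
The generating series `F r = ∑ₖ A_k(r) Xᵏ` of the Raney numbers `A_k(r) = r/(pk+r)·C(pk+r, k)`
satisfy `F 0 = 1` and, by Pascal's rule, `F (r + 1) = F r + X · F (r + p)`. Comparing coefficients,
a family with this recurrence is determined by its first member; since `r ↦ F (r + s)` and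
`r ↦ F r · F s` both satisfy it and agree at `r = 0`, we get `F r = (F 1) ^ r`, and the recurrence
at `r = 0` becomes `F 1 = 1 + X · (F 1) ^ p`. For `p = 5`, `F 1` is `u`.
-/

open PowerSeries

section RaneyRecurrence

variable {R : Type*} [CommSemiring R] {p : ℕ}

def IsRaneyFamily (p : ℕ) (F : ℕ → R⟦X⟧) : Prop :=
  ∀ r, F (r + 1) = F r + X * F (r + p)

namespace IsRaneyFamily

variable {F G : ℕ → R⟦X⟧}

theorem ext (hF : IsRaneyFamily p F) (hG : IsRaneyFamily p G) (h0 : F 0 = G 0) : F = G := by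
  funext r
  ext n
  induction n generalizing r with
  | zero =>
    induction r with
    | zero => rw [h0]
    | succ r ih => rw [hF r, hG r, map_add, map_add, coeff_zero_X_mul, coeff_zero_X_mul, ih]
  | succ n ihn =>
    induction r with
    | zero => rw [h0]
    | succ r ih => rw [hF r, hG r, map_add, map_add, coeff_succ_X_mul, coeff_succ_X_mul, ih, ihn]

theorem shift (hF : IsRaneyFamily p F) (s : ℕ) : IsRaneyFamily p fun r ↦ F (r + s) := by
  intro r
  simpa only [Nat.add_right_comm] using hF (r + s)

theorem mul_right (hF : IsRaneyFamily p F) (c : R⟦X⟧) : IsRaneyFamily p fun r ↦ F r * c := by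
  intro r
  simp only [hF r]
  ring

theorem add_eq_mul (hF : IsRaneyFamily p F) (h0 : F 0 = 1) (r s : ℕ) :
    F (r + s) = F r * F s :=
  congrFun ((hF.shift s).ext (hF.mul_right (F s)) (by simp [h0])) r

theorem eq_pow (hF : IsRaneyFamily p F) (h0 : F 0 = 1) (r : ℕ) : F r = F 1 ^ r := by
  induction r with
  | zero => simpa using h0
  | succ r ih => rw [hF.add_eq_mul h0, ih, pow_succ]

theorem one_eq (hF : IsRaneyFamily p F) (h0 : F 0 = 1) : F 1 = 1 + X * F 1 ^ p := by
  have h := hF 0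
  rwa [h0, zero_add, zero_add, hF.eq_pow h0 p] at h

end IsRaneyFamily

end RaneyRecurrence

theorem Nat.mul_succ_choose_succ (p k : ℕ) :
    (p * (k + 1)).choose (k + 1) = p * (p * (k + 1) - 1).choose k := by
  rcases Nat.eq_zero_or_pos p with rfl | hp
  · simp
  obtain ⟨n, hn⟩ := Nat.exists_eq_add_one_of_ne_zero (by positivity : p * (k + 1) ≠ 0)
  have h := Nat.add_one_mul_choose_eq n k
  rw [hn, Nat.add_sub_cancel]
  apply Nat.eq_of_mul_eq_mul_right (by omega : 0 < k + 1)
  rw [← h, ← hn]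
  ring

/-- `r/(pk+r)·C(pk+r, k)` in the division-free form `C(pk+r, k) - p·C(pk+r-1, k-1)` for `k ≥ 1`.
The truncated subtraction only matters when `p = 0`, where its term is multiplied by `0`. -/
def raney (p r : ℕ) : ℕ → ℚ
  | 0 => 1
  | k + 1 => ((p * (k + 1) + r).choose (k + 1) : ℚ) - p * (p * (k + 1) + r - 1).choose k

theorem raney_zero_succ (p k : ℕ) : raney p 0 (k + 1) = 0 := by
  simp only [raney, add_zero, Nat.mul_succ_choose_succ]
  push_cast
  ring

theorem raney_succ_succ (p r k : ℕ) :
    raney p (r + 1) (k + 1) = raney p r (k + 1) + raney p (r + p) k := by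
  obtain ⟨N, hN⟩ : ∃ N, p * (k + 1) + r = N := ⟨_, rfl⟩
  have hN1 : p * (k + 1) + (r + 1) = N + 1 := by omega
  simp only [raney, hN, hN1, Nat.add_sub_cancel, Nat.choose_succ_succ' N]
  cases k with
  | zero => simp only [Nat.choose_zero_right]; push_cast; ring
  | succ j =>
    have hN' : p * (j + 1) + (r + p) = N := by rw [← hN]; ring
    have hpascal : (p : ℚ) * N.choose (j + 1) = p * ((N - 1).choose j + (N - 1).choose (j + 1)) := by
      rcases Nat.eq_zero_or_pos p with rfl | hp
      · simp
      · obtain ⟨n, rfl⟩ := Nat.exists_eq_add_one_of_ne_zero (by rw [← hN]; positivity : N ≠ 0)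
        rw [Nat.add_sub_cancel, Nat.choose_succ_succ']
        push_cast
        ring
    simp only [hN']
    push_cast
    linear_combination -hpascal

theorem raney_one (q k : ℕ) : raney (q + 1) 1 k = ((q + 1) * k).choose k / (q * k + 1) := by
  cases k with
  | zero => simp [raney]
  | succ j =>
    obtain ⟨M, hM⟩ : ∃ M, (q + 1) * (j + 1) = M := ⟨_, rfl⟩
    have hsub : M - j = q * (j + 1) + 1 := by rw [← hM, add_one_mul]; omega
    have hr : ((M.choose (j + 1) : ℕ) : ℚ) * (j + 1) = M.choose j * (q * (j + 1) + 1) := by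
      exact_mod_cast hsub ▸ Nat.choose_succ_right_eq M j
    simp only [raney, hM, Nat.add_sub_cancel, Nat.choose_succ_succ' M]
    rw [eq_div_iff (by positivity)]
    push_cast
    linear_combination (q : ℚ) * hr

theorem isRaneyFamily_mk_raney (p : ℕ) : IsRaneyFamily p fun r ↦ mk (raney p r) := by
  intro r
  ext (_ | k)
  · simp [raney]
  · rw [map_add, coeff_succ_X_mul]
    simp only [coeff_mk, raney_succ_succ]

theorem mk_raney_zero (p : ℕ) : mk (raney p 0) = 1 := by
  ext (_ | k)
  · simp [raney]
  · simp [raney_zero_succ]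

/-- The formal power series `u(w) = ∑ binomial(5k,k)/(4k+1) wᵏ` of 4-Fuss–Catalan
numbers satisfies the Lagrange-inversion identity `u = 1 + w·u^5`. -/
theorem stmt_14 (u : PowerSeries ℚ)
    (hu : u = PowerSeries.mk fun k => (Nat.choose (5 * k) k : ℚ) / (4 * k + 1)) :
    u = 1 + PowerSeries.X * u ^ 5 := by
  have hu' : u = mk (raney 5 1) := by
    rw [hu]
    congr 1
    funext k
    rw [raney_one 4 k]
    norm_num
  rw [hu']
  exact (isRaneyFamily_mk_raney 5).one_eq (mk_raney_zero 5)
end
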